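/- Let n ≥ 2. Then |T| = |S|, and consequently |A_0| = |M|, where A_0 := A \ B. -/
import Mathlib


open Finset

/-- The set `A`: lattice points `v ∈ ℤ^(m+1)` with `-dᵢ < vᵢ ≤ aᵢ` for all `i`, and for all
pairs `i < j` with `j` not the last index, `dⱼ(vᵢ - aᵢ) ≤ dᵢ vⱼ` and `dᵢ vⱼ < dⱼ vᵢ + dᵢ aⱼ`. -/
def setA (m : ℕ) (a d : Fin (m + 1) → ℤ) : Set (Fin (m + 1) → ℤ) :=
  {v | (∀ i, -d i < v i ∧ v i ≤ a i) ∧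
    ∀ i j : Fin (m + 1), i < j → j ≠ Fin.last m →
      d j * (v i - a i) ≤ d i * v j ∧ d i * v j < d j * v i + d i * a j}

/-- The set `B`: lattice points `v ∈ ℤ^(m+1)` with `-dᵢ < vᵢ ≤ aᵢ` for all `i`, and for all
pairs `i < j`, `dⱼ(vᵢ - aᵢ) ≤ dᵢ vⱼ` and `dᵢ vⱼ < dⱼ vᵢ + dᵢ aⱼ`. -/
def setB (m : ℕ) (a d : Fin (m + 1) → ℤ) : Set (Fin (m + 1) → ℤ) :=
  {v | (∀ i, -d i < v i ∧ v i ≤ a i) ∧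
    ∀ i j : Fin (m + 1), i < j →
      d j * (v i - a i) ≤ d i * v j ∧ d i * v j < d j * v i + d i * a j}

/-- The set `T̄`: elements `v` of `A` for which some non-last index `i` satisfies
`dᵢ vₙ ≥ dₙ vᵢ + dᵢ aₙ`. -/
def setTbar (m : ℕ) (a d : Fin (m + 1) → ℤ) : Set (Fin (m + 1) → ℤ) :=
  {v | v ∈ setA m a d ∧ ∃ i : Fin (m + 1), i ≠ Fin.last m ∧
    d (Fin.last m) * v i + d i * a (Fin.last m) ≤ d i * v (Fin.last m)}

/-- The set `S`: elements `v` of `A` for which some non-last index `i` satisfies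
`dᵢ vₙ < dₙ (vᵢ - aᵢ)`. -/
def setS (m : ℕ) (a d : Fin (m + 1) → ℤ) : Set (Fin (m + 1) → ℤ) :=
  {v | v ∈ setA m a d ∧ ∃ i : Fin (m + 1), i ≠ Fin.last m ∧
    d i * v (Fin.last m) < d (Fin.last m) * (v i - a i)}

/-- The set `M`: elements `v` of `A` with `aₙ - dₙ < vₙ ≤ aₙ` and some non-last index `i`
with `-dᵢ < vᵢ ≤ 0`. -/
def setM (m : ℕ) (a d : Fin (m + 1) → ℤ) : Set (Fin (m + 1) → ℤ) :=
  {v | v ∈ setA m a d ∧ (a (Fin.last m) - d (Fin.last m) < v (Fin.last m) ∧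
      v (Fin.last m) ≤ a (Fin.last m)) ∧
    ∃ i : Fin (m + 1), i ≠ Fin.last m ∧ -d i < v i ∧ v i ≤ 0}

/-- The set `T`: elements `v` of `M` such that every non-last index `j` satisfies
`dⱼ vₙ < dₙ vⱼ + dⱼ aₙ`. -/
def setT (m : ℕ) (a d : Fin (m + 1) → ℤ) : Set (Fin (m + 1) → ℤ) :=
  {v | v ∈ setM m a d ∧ ∀ j : Fin (m + 1), j ≠ Fin.last m →
    d j * v (Fin.last m) < d (Fin.last m) * v j + d j * a (Fin.last m)}

namespace Stmt9Aux

lemma key_le {x y p q : ℤ} (hp : 0 < p) (hq : 0 < q) :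
    (x : ℚ) / (p : ℚ) ≤ (y : ℚ) / (q : ℚ) ↔ x * q ≤ y * p := by
  rw [div_le_div_iff₀ (by exact_mod_cast hp) (by exact_mod_cast hq)]
  exact_mod_cast Iff.rfl

lemma key_lt {x y p q : ℤ} (hp : 0 < p) (hq : 0 < q) :
    (x : ℚ) / (p : ℚ) < (y : ℚ) / (q : ℚ) ↔ x * q < y * p := by
  rw [div_lt_div_iff₀ (by exact_mod_cast hp) (by exact_mod_cast hq)]
  exact_mod_cast Iff.rfl

variable {m : ℕ}

def nonlast (m : ℕ) : Finset (Fin (m + 1)) := Finset.univ.filter (· ≠ Fin.last m)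

lemma mem_nonlast {i : Fin (m + 1)} : i ∈ nonlast m ↔ i ≠ Fin.last m := by
  simp [nonlast]

lemma nonlast_nonempty (hm : 1 ≤ m) : (nonlast m).Nonempty := by
  refine ⟨0, mem_nonlast.2 ?_⟩
  intro h
  have := congrArg Fin.val h
  simp [Fin.last] at this
  omega

noncomputable def iMax (hm : 1 ≤ m) (h : Fin (m + 1) → ℚ) : Fin (m + 1) :=
  ((nonlast m).filter (fun i => ∀ j ∈ nonlast m, h j ≤ h i)).max' (by
    obtain ⟨b, hb, hb2⟩ := Finset.exists_max_image (nonlast m) h (nonlast_nonempty hm)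
    exact ⟨b, Finset.mem_filter.2 ⟨hb, hb2⟩⟩)

lemma iMax_mem (hm : 1 ≤ m) (h : Fin (m + 1) → ℚ) : iMax hm h ∈ nonlast m :=
  (Finset.mem_filter.1 (Finset.max'_mem _ _)).1

lemma iMax_le (hm : 1 ≤ m) (h : Fin (m + 1) → ℚ) : ∀ j ∈ nonlast m, h j ≤ h (iMax hm h) := by
  have h1 : iMax hm h ∈ (nonlast m).filter (fun i => ∀ j ∈ nonlast m, h j ≤ h i) :=
    Finset.max'_mem _ _
  exact (Finset.mem_filter.1 h1).2

lemma iMax_lt (hm : 1 ≤ m) (h : Fin (m + 1) → ℚ) {j : Fin (m + 1)} (hj : j ∈ nonlast m)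
    (hlt : iMax hm h < j) : h j < h (iMax hm h) := by
  by_contra hc
  push_neg at hc
  have hmem : j ∈ (nonlast m).filter (fun i => ∀ k ∈ nonlast m, h k ≤ h i) :=
    Finset.mem_filter.2 ⟨hj, fun k hk => (iMax_le hm h k hk).trans hc⟩
  exact absurd (Finset.le_max' _ j hmem) (not_le.2 hlt)

lemma iMax_eq (hm : 1 ≤ m) (h : Fin (m + 1) → ℚ) {i0 : Fin (m + 1)} (h0 : i0 ∈ nonlast m)
    (hmax : ∀ j ∈ nonlast m, h j ≤ h i0)
    (hstrict : ∀ j ∈ nonlast m, i0 < j → h j < h i0) : iMax hm h = i0 := by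
  have hle : i0 ≤ iMax hm h := Finset.le_max' _ _ (Finset.mem_filter.2 ⟨h0, hmax⟩)
  rcases eq_or_lt_of_le hle with he | hlt
  · exact he.symm
  · exact absurd (iMax_le hm h i0 h0) (not_le.2 (hstrict _ (iMax_mem hm h) hlt))

noncomputable def jMin (hm : 1 ≤ m) (h : Fin (m + 1) → ℚ) : Fin (m + 1) :=
  ((nonlast m).filter (fun i => ∀ j ∈ nonlast m, h i ≤ h j)).min' (by
    obtain ⟨b, hb, hb2⟩ := Finset.exists_min_image (nonlast m) h (nonlast_nonempty hm)
    exact ⟨b, Finset.mem_filter.2 ⟨hb, hb2⟩⟩)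

lemma jMin_mem (hm : 1 ≤ m) (h : Fin (m + 1) → ℚ) : jMin hm h ∈ nonlast m :=
  (Finset.mem_filter.1 (Finset.min'_mem _ _)).1

lemma jMin_le (hm : 1 ≤ m) (h : Fin (m + 1) → ℚ) : ∀ j ∈ nonlast m, h (jMin hm h) ≤ h j := by
  have h1 : jMin hm h ∈ (nonlast m).filter (fun i => ∀ j ∈ nonlast m, h i ≤ h j) :=
    Finset.min'_mem _ _
  exact (Finset.mem_filter.1 h1).2

lemma jMin_lt (hm : 1 ≤ m) (h : Fin (m + 1) → ℚ) {j : Fin (m + 1)} (hj : j ∈ nonlast m)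
    (hlt : j < jMin hm h) : h (jMin hm h) < h j := by
  by_contra hc
  push_neg at hc
  have hmem : j ∈ (nonlast m).filter (fun i => ∀ k ∈ nonlast m, h i ≤ h k) :=
    Finset.mem_filter.2 ⟨hj, fun k hk => hc.trans (jMin_le hm h k hk)⟩
  exact absurd (Finset.min'_le _ j hmem) (not_le.2 hlt)

lemma jMin_eq (hm : 1 ≤ m) (h : Fin (m + 1) → ℚ) {j0 : Fin (m + 1)} (h0 : j0 ∈ nonlast m)
    (hmin : ∀ j ∈ nonlast m, h j0 ≤ h j)
    (hstrict : ∀ j ∈ nonlast m, j < j0 → h j0 < h j) : jMin hm h = j0 := by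
  have hle : jMin hm h ≤ j0 := Finset.min'_le _ _ (Finset.mem_filter.2 ⟨h0, hmin⟩)
  rcases eq_or_lt_of_le hle with he | hlt
  · exact he
  · exact absurd (jMin_le hm h j0 h0) (not_le.2 (hstrict _ (jMin_mem hm h) hlt))

section Pairs

variable {a d u : Fin (m + 1) → ℤ}

lemma qC1 (hd : ∀ i, 0 < d i) (hu : u ∈ setA m a d) {i j : Fin (m + 1)}
    (hij : i < j) (hj : j ≠ Fin.last m) :
    ((u i : ℚ) - a i) / d i ≤ (u j : ℚ) / d j := by
  have h := (hu.2 i j hij hj).1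
  have h2 : ((u i - a i : ℤ) : ℚ) / d i ≤ ((u j : ℤ) : ℚ) / d j := by
    rw [key_le (hd i) (hd j)]; linarith
  push_cast at h2
  convert h2 using 2

lemma qC2 (hd : ∀ i, 0 < d i) (hu : u ∈ setA m a d) {i j : Fin (m + 1)}
    (hij : i < j) (hj : j ≠ Fin.last m) :
    ((u j : ℚ) - a j) / d j < (u i : ℚ) / d i := by
  have h := (hu.2 i j hij hj).2
  have h2 : ((u j - a j : ℤ) : ℚ) / d j < ((u i : ℤ) : ℚ) / d i := by
    rw [key_lt (hd j) (hd i)]; linarith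
  push_cast at h2
  convert h2 using 2

end Pairs

-- continuation (will be appended into aux file namespace)
section Main

variable {m : ℕ} {a d : Fin (m + 1) → ℤ}

def shiftMap (a : Fin (m + 1) → ℤ) (i0 : Fin (m + 1)) (v : Fin (m + 1) → ℤ) :
    Fin (m + 1) → ℤ :=
  fun k => if k = Fin.last m then v k + a k else if k = i0 then v k - a k else v k

def unshiftMap (a : Fin (m + 1) → ℤ) (j0 : Fin (m + 1)) (w : Fin (m + 1) → ℤ) :
    Fin (m + 1) → ℤ :=
  fun k => if k = Fin.last m then w k - a k else if k = j0 then w k + a k else w k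

lemma unshift_shift {i0 : Fin (m + 1)} (hi0 : i0 ≠ Fin.last m) (v : Fin (m + 1) → ℤ) :
    unshiftMap a i0 (shiftMap a i0 v) = v := by
  funext k
  by_cases h1 : k = Fin.last m
  · simp [shiftMap, unshiftMap, h1]
  · by_cases h2 : k = i0
    · simp [shiftMap, unshiftMap, h1, h2, hi0]
    · simp [shiftMap, unshiftMap, h1, h2]

lemma shift_unshift {j0 : Fin (m + 1)} (hj0 : j0 ≠ Fin.last m) (w : Fin (m + 1) → ℤ) :
    shiftMap a j0 (unshiftMap a j0 w) = w := by
  funext k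
  by_cases h1 : k = Fin.last m
  · simp [shiftMap, unshiftMap, h1]
  · by_cases h2 : k = j0
    · simp [shiftMap, unshiftMap, h1, h2, hj0]
    · simp [shiftMap, unshiftMap, h1, h2]

lemma shift_eval_last (v : Fin (m + 1) → ℤ) (i0 : Fin (m + 1)) :
    shiftMap a i0 v (Fin.last m) = v (Fin.last m) + a (Fin.last m) := by
  simp [shiftMap]

lemma shift_eval_i0 {i0 : Fin (m + 1)} (hi0 : i0 ≠ Fin.last m) (v : Fin (m + 1) → ℤ) :
    shiftMap a i0 v i0 = v i0 - a i0 := by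
  simp [shiftMap, hi0]

lemma shift_eval_other {i0 k : Fin (m + 1)} (hk : k ≠ Fin.last m) (hk2 : k ≠ i0)
    (v : Fin (m + 1) → ℤ) : shiftMap a i0 v k = v k := by
  simp [shiftMap, hk, hk2]

lemma unshift_eval_last (w : Fin (m + 1) → ℤ) (j0 : Fin (m + 1)) :
    unshiftMap a j0 w (Fin.last m) = w (Fin.last m) - a (Fin.last m) := by
  simp [unshiftMap]

lemma unshift_eval_j0 {j0 : Fin (m + 1)} (hj0 : j0 ≠ Fin.last m) (w : Fin (m + 1) → ℤ) :
    unshiftMap a j0 w j0 = w j0 + a j0 := by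
  simp [unshiftMap, hj0]

lemma unshift_eval_other {j0 k : Fin (m + 1)} (hk : k ≠ Fin.last m) (hk2 : k ≠ j0)
    (w : Fin (m + 1) → ℤ) : unshiftMap a j0 w k = w k := by
  simp [unshiftMap, hk, hk2]

end Main

section Big

variable {m : ℕ} {a d : Fin (m + 1) → ℤ}

lemma qself {u : Fin (m + 1) → ℤ} {i : Fin (m + 1)} (hai : 0 < a i) (hdi : 0 < d i) :
    ((u i : ℚ) - a i) / d i < (u i : ℚ) / d i := by
  have hd' : (0 : ℚ) < (d i : ℚ) := by exact_mod_cast hdi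
  have ha' : (0 : ℚ) < (a i : ℚ) := by exact_mod_cast hai
  rw [div_lt_div_iff₀ hd' hd']
  nlinarith

lemma shift_mem_setT (hm : 1 ≤ m) (ha : ∀ i, 0 < a i) (hd : ∀ i, 0 < d i)
    {v : Fin (m + 1) → ℤ} {i0 : Fin (m + 1)} (hi0 : i0 ∈ nonlast m)
    (hmax : ∀ j ∈ nonlast m, ((v j : ℚ) - a j) / d j ≤ ((v i0 : ℚ) - a i0) / d i0)
    (hstrict : ∀ j ∈ nonlast m, i0 < j → ((v j : ℚ) - a j) / d j < ((v i0 : ℚ) - a i0) / d i0)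
    (hv : v ∈ setS m a d) : shiftMap a i0 v ∈ setT m a d := by
  obtain ⟨hvA, i₁, hi₁, hS⟩ := hv
  have hbox := hvA.1
  have hpair := hvA.2
  have hi0L : i0 ≠ Fin.last m := mem_nonlast.1 hi0
  have hdq : ∀ i, (0 : ℚ) < (d i : ℚ) := fun i => by exact_mod_cast hd i
  have hQ1 : (v (Fin.last m) : ℚ) / d (Fin.last m) < ((v i₁ : ℚ) - a i₁) / d i₁ := by
    have h2 : ((v (Fin.last m) : ℤ) : ℚ) / d (Fin.last m) < ((v i₁ - a i₁ : ℤ) : ℚ) / d i₁ := by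
      rw [key_lt (hd _) (hd _)]; linarith [hS]
    push_cast at h2
    exact h2
  have hQ : (v (Fin.last m) : ℚ) / d (Fin.last m) < ((v i0 : ℚ) - a i0) / d i0 :=
    hQ1.trans_le (hmax i₁ (mem_nonlast.2 hi₁))
  have hb0 : ((v i0 : ℚ) - a i0) / d i0 ≤ 0 := by
    apply div_nonpos_iff.2
    refine Or.inr ⟨?_, (hdq i0).le⟩
    have := (hbox i0).2
    have h' : (v i0 : ℚ) ≤ (a i0 : ℚ) := by exact_mod_cast this
    linarith
  have hvL0 : v (Fin.last m) < 0 := by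
    by_contra hc
    push_neg at hc
    have h' : (0 : ℚ) ≤ (v (Fin.last m) : ℚ) / d (Fin.last m) :=
      div_nonneg (by exact_mod_cast hc) (hdq _).le
    linarith
  have hgL : (-1 : ℚ) < (v (Fin.last m) : ℚ) / d (Fin.last m) := by
    rw [lt_div_iff₀ (hdq _)]
    have h1 := (hbox (Fin.last m)).1
    have h' : (-(d (Fin.last m)) : ℚ) < (v (Fin.last m) : ℚ) := by exact_mod_cast h1
    linarith
  have hβ : (-1 : ℚ) < ((v i0 : ℚ) - a i0) / d i0 := hgL.trans hQ
  have hlow : -d i0 < v i0 - a i0 := by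
    have h1 : (-1 : ℚ) * d i0 < (v i0 : ℚ) - a i0 := (lt_div_iff₀ (hdq i0)).1 hβ
    have h2 : (-(d i0) : ℚ) < ((v i0 - a i0 : ℤ) : ℚ) := by push_cast; linarith
    exact_mod_cast h2
  refine ⟨⟨⟨?_, ?_⟩, ⟨?_, ?_⟩, ⟨i0, hi0L, ?_, ?_⟩⟩, ?_⟩
  · -- box
    intro k
    rcases eq_or_ne k (Fin.last m) with rfl | hkL
    · rw [shift_eval_last]
      exact ⟨by linarith [(hbox (Fin.last m)).1, ha (Fin.last m)], by linarith⟩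
    · rcases eq_or_ne k i0 with rfl | hki0
      · rw [shift_eval_i0 hkL]
        exact ⟨hlow, by linarith [(hbox k).2, ha k]⟩
      · rw [shift_eval_other hkL hki0]
        exact hbox k
  · -- pairs
    intro i j hij hjL
    have hiL : i ≠ Fin.last m := by
      intro h
      rw [h] at hij
      exact absurd (Fin.le_last j) (not_le.2 hij)
    rcases eq_or_ne i i0 with hii0 | hii0
    · have hi0j : i0 < j := hii0 ▸ hij
      have hji0 : j ≠ i0 := ne_of_gt hi0j
      rw [shift_eval_other hjL hji0, hii0, shift_eval_i0 hi0L]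
      constructor
      · have h1 := (hpair i0 j hi0j hjL).1
        linarith [mul_pos (hd j) (ha i0)]
      · have hst := hstrict j (mem_nonlast.2 hjL) hi0j
        have h2 : ((v j - a j : ℤ) : ℚ) / d j < ((v i0 - a i0 : ℤ) : ℚ) / d i0 := by
          push_cast; exact hst
        rw [key_lt (hd j) (hd i0)] at h2
        linarith
    · rcases eq_or_ne j i0 with hji0 | hji0
      · have hij0 : i < i0 := hji0 ▸ hij
        rw [shift_eval_other hiL hii0, hji0, shift_eval_i0 hi0L]
        constructor
        · have hle := hmax i (mem_nonlast.2 hiL)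
          have h2 : ((v i - a i : ℤ) : ℚ) / d i ≤ ((v i0 - a i0 : ℤ) : ℚ) / d i0 := by
            push_cast; exact hle
          rw [key_le (hd i) (hd i0)] at h2
          linarith
        · have h1 := (hpair i i0 hij0 hi0L).2
          linarith [mul_pos (hd i) (ha i0)]
      · rw [shift_eval_other hiL hii0, shift_eval_other hjL hji0]
        exact hpair i j hij hjL
  · -- mid1
    rw [shift_eval_last]
    linarith [(hbox (Fin.last m)).1]
  · -- mid2
    rw [shift_eval_last]
    linarith
  · -- ex lower
    rw [shift_eval_i0 hi0L]
    exact hlow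
  · -- ex upper
    rw [shift_eval_i0 hi0L]
    linarith [(hbox i0).2]
  · -- final forall
    intro j hjL
    rw [shift_eval_last]
    have hq : (v (Fin.last m) : ℚ) / d (Fin.last m) < ((shiftMap a i0 v j : ℤ) : ℚ) / d j := by
      rcases eq_or_ne j i0 with hji0 | hji0
      · rw [hji0, shift_eval_i0 hi0L]
        push_cast
        exact hQ
      · rw [shift_eval_other hjL hji0]
        have hfg : ((v i0 : ℚ) - a i0) / d i0 ≤ (v j : ℚ) / d j := by
          rcases lt_trichotomy i0 j with h | h | h
          · exact qC1 hd hvA h hjL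
          · exact absurd h.symm hji0
          · exact (qC2 hd hvA h hi0L).le
        exact hQ.trans_le hfg
    rw [key_lt (hd (Fin.last m)) (hd j)] at hq
    linarith

lemma unshift_mem_setS (hm : 1 ≤ m) (ha : ∀ i, 0 < a i) (hd : ∀ i, 0 < d i)
    {w : Fin (m + 1) → ℤ} {j0 : Fin (m + 1)} (hj0 : j0 ∈ nonlast m)
    (hmin : ∀ j ∈ nonlast m, (w j0 : ℚ) / d j0 ≤ (w j : ℚ) / d j)
    (hstrict : ∀ j ∈ nonlast m, j < j0 → (w j0 : ℚ) / d j0 < (w j : ℚ) / d j)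
    (hw : w ∈ setT m a d) : unshiftMap a j0 w ∈ setS m a d := by
  obtain ⟨⟨hwA, ⟨hmid1, hmid2⟩, i₁, hi₁, hneg1, hneg2⟩, hall⟩ := hw
  have hbox := hwA.1
  have hpair := hwA.2
  have hj0L : j0 ≠ Fin.last m := mem_nonlast.1 hj0
  have hdq : ∀ i, (0 : ℚ) < (d i : ℚ) := fun i => by exact_mod_cast hd i
  have hγ : (w j0 : ℚ) / d j0 ≤ 0 := by
    refine (hmin i₁ (mem_nonlast.2 hi₁)).trans ?_
    apply div_nonpos_iff.2
    exact Or.inr ⟨by exact_mod_cast hneg2, (hdq i₁).le⟩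
  have hwj0 : w j0 ≤ 0 := by
    by_contra hc
    push_neg at hc
    have h' : (0 : ℚ) < (w j0 : ℚ) / d j0 := div_pos (by exact_mod_cast hc) (hdq j0)
    linarith
  refine ⟨⟨?_, ?_⟩, j0, hj0L, ?_⟩
  · -- box
    intro k
    rcases eq_or_ne k (Fin.last m) with rfl | hkL
    · rw [unshift_eval_last]
      exact ⟨by linarith, by linarith [(hbox (Fin.last m)).2, ha (Fin.last m)]⟩
    · rcases eq_or_ne k j0 with rfl | hkj0
      · rw [unshift_eval_j0 hkL]
        exact ⟨by linarith [(hbox k).1, ha k], by linarith⟩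
      · rw [unshift_eval_other hkL hkj0]
        exact hbox k
  · -- pairs
    intro i j hij hjL
    have hiL : i ≠ Fin.last m := by
      intro h
      rw [h] at hij
      exact absurd (Fin.le_last j) (not_le.2 hij)
    rcases eq_or_ne i j0 with hij0 | hij0
    · have hj0j : j0 < j := hij0 ▸ hij
      have hjj0 : j ≠ j0 := ne_of_gt hj0j
      rw [unshift_eval_other hjL hjj0, hij0, unshift_eval_j0 hj0L]
      constructor
      · have hle := hmin j (mem_nonlast.2 hjL)
        have h2 : ((w j0 : ℤ) : ℚ) / d j0 ≤ ((w j : ℤ) : ℚ) / d j := by push_cast; exact hle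
        rw [key_le (hd j0) (hd j)] at h2
        linarith
      · have h1 := (hpair j0 j hj0j hjL).2
        linarith [mul_pos (hd j) (ha j0)]
    · rcases eq_or_ne j j0 with hjj0 | hjj0
      · have hij0' : i < j0 := hjj0 ▸ hij
        rw [unshift_eval_other hiL hij0, hjj0, unshift_eval_j0 hj0L]
        constructor
        · have h1 := (hpair i j0 hij0' hj0L).1
          linarith [mul_pos (hd i) (ha j0)]
        · have hst := hstrict i (mem_nonlast.2 hiL) hij0'
          have h2 : ((w j0 : ℤ) : ℚ) / d j0 < ((w i : ℤ) : ℚ) / d i := by push_cast; exact hst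
          rw [key_lt (hd j0) (hd i)] at h2
          linarith
      · rw [unshift_eval_other hiL hij0, unshift_eval_other hjL hjj0]
        exact hpair i j hij hjL
  · -- existential
    rw [unshift_eval_last, unshift_eval_j0 hj0L]
    have h1 := hall j0 hj0L
    linarith

lemma jMin_shift (hm : 1 ≤ m) (hd : ∀ i, 0 < d i) {v : Fin (m + 1) → ℤ} {i0 : Fin (m + 1)}
    (hi0 : i0 ∈ nonlast m) (hvA : v ∈ setA m a d) :
    jMin hm (fun i => ((shiftMap a i0 v i : ℤ) : ℚ) / d i) = i0 := by
  have hi0L : i0 ≠ Fin.last m := mem_nonlast.1 hi0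
  apply jMin_eq hm _ hi0
  · intro j hj
    rcases eq_or_ne j i0 with rfl | hji0
    · exact le_refl _
    · have hjL : j ≠ Fin.last m := mem_nonlast.1 hj
      rw [shift_eval_i0 hi0L, shift_eval_other hjL hji0]
      have goal2 : ((v i0 : ℚ) - a i0) / d i0 ≤ (v j : ℚ) / d j := by
        rcases lt_trichotomy i0 j with h | h | h
        · exact qC1 hd hvA h hjL
        · exact absurd h hji0.symm
        · exact (qC2 hd hvA h hi0L).le
      push_cast
      exact goal2
  · intro j hj hlt
    have hjL : j ≠ Fin.last m := mem_nonlast.1 hj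
    have hji0 : j ≠ i0 := ne_of_lt hlt
    rw [shift_eval_i0 hi0L, shift_eval_other hjL hji0]
    have goal2 : ((v i0 : ℚ) - a i0) / d i0 < (v j : ℚ) / d j := qC2 hd hvA hlt hi0L
    push_cast
    exact goal2

lemma iMax_unshift (hm : 1 ≤ m) (hd : ∀ i, 0 < d i) {w : Fin (m + 1) → ℤ} {j0 : Fin (m + 1)}
    (hj0 : j0 ∈ nonlast m) (hwA : w ∈ setA m a d) :
    iMax hm (fun i => ((unshiftMap a j0 w i : ℚ) - a i) / d i) = j0 := by
  have hj0L : j0 ≠ Fin.last m := mem_nonlast.1 hj0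
  apply iMax_eq hm _ hj0
  · intro j hj
    rcases eq_or_ne j j0 with rfl | hjj0
    · exact le_refl _
    · have hjL : j ≠ Fin.last m := mem_nonlast.1 hj
      rw [unshift_eval_j0 hj0L, unshift_eval_other hjL hjj0]
      have goal2 : ((w j : ℚ) - a j) / d j ≤ (w j0 : ℚ) / d j0 := by
        rcases lt_trichotomy j j0 with h | h | h
        · exact qC1 hd hwA h hj0L
        · exact absurd h hjj0
        · exact (qC2 hd hwA h hjL).le
      push_cast
      rw [add_sub_cancel_right]
      exact goal2
  · intro j hj hlt
    have hjL : j ≠ Fin.last m := mem_nonlast.1 hj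
    have hjj0 : j ≠ j0 := ne_of_gt hlt
    rw [unshift_eval_j0 hj0L, unshift_eval_other hjL hjj0]
    have goal2 : ((w j : ℚ) - a j) / d j < (w j0 : ℚ) / d j0 := qC2 hd hwA hlt hjL
    push_cast
    rw [add_sub_cancel_right]
    exact goal2

end Big

section Final

variable {m : ℕ} {a d : Fin (m + 1) → ℤ}

lemma setA_finite (m : ℕ) (a d : Fin (m + 1) → ℤ) : (setA m a d).Finite := by
  apply Set.Finite.subset (Set.Finite.pi (fun i => Set.finite_Ioc (-(d i)) (a i)))
  intro v hv
  simp only [Set.mem_pi, Set.mem_univ, Set.mem_Ioc, forall_const]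
  exact fun i => hv.1 i

set_option maxHeartbeats 1000000 in
lemma card_T_eq_card_S (hm : 1 ≤ m) (ha : ∀ i, 0 < a i) (hd : ∀ i, 0 < d i) :
    (setT m a d).ncard = (setS m a d).ncard := by
  classical
  set Phi : (Fin (m + 1) → ℤ) → (Fin (m + 1) → ℤ) :=
    fun v => shiftMap a (iMax hm (fun i => ((v i : ℚ) - a i) / d i)) v with hPhi
  set Psi : (Fin (m + 1) → ℤ) → (Fin (m + 1) → ℤ) :=
    fun w => unshiftMap a (jMin hm (fun i => (w i : ℚ) / d i)) w with hPsi
  have hPhiv : ∀ v, Phi v = shiftMap a (iMax hm (fun i => ((v i : ℚ) - a i) / d i)) v :=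
    fun v => rfl
  have hPsiw : ∀ w, Psi w = unshiftMap a (jMin hm (fun i => (w i : ℚ) / d i)) w :=
    fun w => rfl
  have hΨΦ : ∀ v ∈ setS m a d, Psi (Phi v) = v := by
    intro v hv
    rw [hPhiv v, hPsiw]
    rw [jMin_shift hm hd (iMax_mem hm (fun i => ((v i : ℚ) - a i) / d i)) hv.1]
    exact unshift_shift (mem_nonlast.1 (iMax_mem hm (fun i => ((v i : ℚ) - a i) / d i))) v
  have hΦΨ : ∀ w ∈ setT m a d, Phi (Psi w) = w := by
    intro w hw
    rw [hPsiw w, hPhiv]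
    rw [iMax_unshift hm hd (jMin_mem hm (fun i => (w i : ℚ) / d i)) hw.1.1]
    exact shift_unshift (mem_nonlast.1 (jMin_mem hm (fun i => (w i : ℚ) / d i))) w
  have hinj : Set.InjOn Phi (setS m a d) := by
    intro x hx y hy hxy
    rw [← hΨΦ x hx, ← hΨΦ y hy, hxy]
  have himg : Phi '' setS m a d = setT m a d := by
    apply Set.Subset.antisymm
    · rintro w ⟨v, hv, rfl⟩
      rw [hPhiv v]
      exact shift_mem_setT hm ha hd (iMax_mem hm (fun i => ((v i : ℚ) - a i) / d i))
        (iMax_le hm (fun i => ((v i : ℚ) - a i) / d i))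
        (fun j hj hlt => iMax_lt hm (fun i => ((v i : ℚ) - a i) / d i) hj hlt) hv
    · intro w hw
      refine ⟨Psi w, ?_, hΦΨ w hw⟩
      rw [hPsiw w]
      exact unshift_mem_setS hm ha hd (jMin_mem hm (fun i => (w i : ℚ) / d i))
        (jMin_le hm (fun i => (w i : ℚ) / d i))
        (fun j hj hlt => jMin_lt hm (fun i => (w i : ℚ) / d i) hj hlt) hw
  rw [← himg, Set.ncard_image_of_injOn hinj]

lemma diff_eq_union (m : ℕ) (a d : Fin (m + 1) → ℤ) :
    setA m a d \ setB m a d = setS m a d ∪ setTbar m a d := by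
  ext v
  constructor
  · rintro ⟨hvA, hvB⟩
    by_contra hc
    apply hvB
    refine ⟨hvA.1, fun i j hij => ?_⟩
    by_cases hjL : j = Fin.last m
    · subst hjL
      constructor
      · by_contra h
        push_neg at h
        exact hc (Set.mem_union_left _ ⟨hvA, i, ne_of_lt hij, h⟩)
      · by_contra h
        push_neg at h
        exact hc (Set.mem_union_right _ ⟨hvA, i, ne_of_lt hij, h⟩)
    · exact hvA.2 i j hij hjL
  · rintro (⟨hvA, i, hiL, hi⟩ | ⟨hvA, i, hiL, hi⟩)
    · refine ⟨hvA, fun hvB => ?_⟩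
      have hiLlt : i < Fin.last m := lt_of_le_of_ne (Fin.le_last i) hiL
      have h := (hvB.2 i (Fin.last m) hiLlt).1
      linarith
    · refine ⟨hvA, fun hvB => ?_⟩
      have hiLlt : i < Fin.last m := lt_of_le_of_ne (Fin.le_last i) hiL
      have h := (hvB.2 i (Fin.last m) hiLlt).2
      linarith

lemma M_eq_union (hd : ∀ i, 0 < d i) :
    setM m a d = setT m a d ∪ setTbar m a d := by
  ext v
  constructor
  · intro hv
    by_cases hall : ∀ j, j ≠ Fin.last m →
        d j * v (Fin.last m) < d (Fin.last m) * v j + d j * a (Fin.last m)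
    · exact Set.mem_union_left _ ⟨hv, hall⟩
    · push_neg at hall
      obtain ⟨j, hjL, hj⟩ := hall
      exact Set.mem_union_right _ ⟨hv.1, j, hjL, hj⟩
  · rintro (ht | ⟨hvA, i, hiL, hi⟩)
    · exact ht.1
    · have hbox := hvA.1
      refine ⟨hvA, ⟨?_, (hbox _).2⟩, i, hiL, (hbox i).1, ?_⟩
      · have h1 : 0 < d (Fin.last m) * (v i + d i) :=
          mul_pos (hd _) (by linarith [(hbox i).1])
        have h2 : d i * (a (Fin.last m) - d (Fin.last m)) < d i * v (Fin.last m) := by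
          nlinarith [hi, h1]
        exact lt_of_mul_lt_mul_left h2 (hd i).le
      · have h3 : d i * v (Fin.last m) ≤ d i * a (Fin.last m) :=
          mul_le_mul_of_nonneg_left (hbox _).2 (hd i).le
        have h4 : d (Fin.last m) * v i ≤ d (Fin.last m) * 0 := by linarith
        exact le_of_mul_le_mul_left h4 (hd _)

lemma disj_S_Tbar (ha : ∀ i, 0 < a i) (hd : ∀ i, 0 < d i) :
    Disjoint (setS m a d) (setTbar m a d) := by
  rw [Set.disjoint_left]
  rintro v ⟨hvA, i, hiL, hi⟩ ⟨_, j, hjL, hj⟩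
  have hdq : ∀ k, (0 : ℚ) < (d k : ℚ) := fun k => by exact_mod_cast hd k
  have h1 : (v (Fin.last m) : ℚ) / d (Fin.last m) < ((v i : ℚ) - a i) / d i := by
    have h2 : ((v (Fin.last m) : ℤ) : ℚ) / d (Fin.last m) < ((v i - a i : ℤ) : ℚ) / d i := by
      rw [key_lt (hd _) (hd _)]; linarith
    push_cast at h2
    exact h2
  have h2 : ((v i : ℚ) - a i) / d i ≤ (v j : ℚ) / d j := by
    rcases lt_trichotomy i j with h | h | h
    · exact qC1 hd hvA h hjL
    · subst h; exact (qself (ha i) (hd i)).le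
    · exact (qC2 hd hvA h hiL).le
  have h12 : (v (Fin.last m) : ℚ) / d (Fin.last m) < (v j : ℚ) / d j := h1.trans_le h2
  rw [key_lt (hd _) (hd j)] at h12
  linarith [mul_pos (hd j) (ha (Fin.last m))]

lemma disj_T_Tbar : Disjoint (setT m a d) (setTbar m a d) := by
  rw [Set.disjoint_left]
  rintro v ⟨_, hall⟩ ⟨_, j, hjL, hj⟩
  linarith [hall j hjL]

end Final

end Stmt9Aux

open Stmt9Aux in
theorem stmt9 (m : ℕ) (hm : 1 ≤ m) (a d : Fin (m + 1) → ℤ)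
    (ha : ∀ i, 0 < a i) (hd : ∀ i, 0 < d i) :
    (setT m a d).ncard = (setS m a d).ncard ∧
    (setA m a d \ setB m a d).ncard = (setM m a d).ncard := by
  have hAfin := setA_finite m a d
  have hSfin : (setS m a d).Finite := hAfin.subset (fun v hv => hv.1)
  have hTfin : (setT m a d).Finite := hAfin.subset (fun v hv => hv.1.1)
  have hTbfin : (setTbar m a d).Finite := hAfin.subset (fun v hv => hv.1)
  have part1 : (setT m a d).ncard = (setS m a d).ncard := card_T_eq_card_S hm ha hd
  refine ⟨part1, ?_⟩
  rw [diff_eq_union m a d, M_eq_union hd,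
    Set.ncard_union_eq (disj_S_Tbar ha hd) hSfin hTbfin,
    Set.ncard_union_eq disj_T_Tbar hTfin hTbfin, part1]
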